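/- (Edge-link claim from the proof of the 2-cycle lemma.) Let d ≥ 1, let b ∈ ℕA_d with deg b = k ≥ 5, and let ε ∈ {1,…,⌊k/2⌋}. Let a ∈ A_d, and let (α,χ), (α',χ') ∈ A_{d+1} both different from (a,1). If conv{e_{(α,χ)}, e_{(α',χ')}, e_{(a,1)}} ⊆ |Δ_{(b,ε)}|, then b − a ∈ ℕA_d and the segment conv{e_{(α,χ)}, e_{(α',χ')}} is contained in |R_{b−a,ε}|. -/

import Mathlib

open CategoryTheory

noncomputable section

/-- The set `A_d ⊆ ℤ^{1+d}` of vectors whose first coordinate is `1` and whose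
remaining coordinates are `0` or `1`. -/
def Avec (d : ℕ) : Set (Fin (d + 1) → ℤ) :=
  {v | v 0 = 1 ∧ ∀ i, i ≠ 0 → v i = 0 ∨ v i = 1}

/-- `ℕA_d`, the additive submonoid of `ℤ^{1+d}` generated by `A_d`. -/
def NA (d : ℕ) : AddSubmonoid (Fin (d + 1) → ℤ) :=
  AddSubmonoid.closure (Avec d)

/-- `ℝ^{A_d}`. -/
abbrev RA (d : ℕ) : Type := ↥(Avec d) → ℝ

/-- The standard basis vector of `ℝ^{A_d}` indexed by `a ∈ A_d`. -/
def eVec {d : ℕ} (a : ↥(Avec d)) : RA d :=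
  fun x => if x = a then 1 else 0

/-- The geometric realization `|Δ_b| ⊆ ℝ^{A_d}`: the union over all tuples
`(a_1, …, a_k)` of elements of `A_d` with `a_1 + ⋯ + a_k = b` of the convex hulls
`conv {e_{a_1}, …, e_{a_k}}`.  (Any such tuple automatically has length `k = deg b`.) -/
def Delta (d : ℕ) (b : Fin (d + 1) → ℤ) : Set (RA d) :=
  ⋃ (k : ℕ) (f : Fin k → ↥(Avec d)) (_ : ∑ i, (f i : Fin (d + 1) → ℤ) = b),
    convexHull ℝ (Set.range fun i => eVec (f i))

lemma snoc_mem_Avec {d : ℕ} {a : Fin (d + 1) → ℤ} (ha : a ∈ Avec d) {χ : ℤ}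
    (hχ : χ = 0 ∨ χ = 1) : Fin.snoc a χ ∈ Avec (d + 1) := by
  constructor
  · have h0 : (0 : Fin (d + 2)) = Fin.castSucc 0 := rfl
    rw [h0, Fin.snoc_castSucc]
    exact ha.1
  · intro i hi
    induction i using Fin.lastCases with
    | last => rw [Fin.snoc_last]; exact hχ
    | cast j =>
      rw [Fin.snoc_castSucc]
      rcases eq_or_ne j 0 with hj | hj
      · exact absurd (by simp [hj]) hi
      · exact ha.2 j hj

/-- Appending a last coordinate `0` to an element of `A_d`. -/
def app0 {d : ℕ} (a : ↥(Avec d)) : ↥(Avec (d + 1)) :=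
  ⟨Fin.snoc ↑a 0, snoc_mem_Avec a.2 (Or.inl rfl)⟩

/-- Appending a last coordinate `1` to an element of `A_d`. -/
def app1 {d : ℕ} (a : ↥(Avec d)) : ↥(Avec (d + 1)) :=
  ⟨Fin.snoc ↑a 1, snoc_mem_Avec a.2 (Or.inr rfl)⟩

/-- The realization `|R_{c,ε}| ⊆ ℝ^{A_{d+1}}`: the union over tuples
`(α_1, …, α_s)` of elements of `A_d` with `α_1 + ⋯ + α_s = c` and over sequences of
pairwise distinct indices `i_1, …, i_{s-1}` of the convex hulls of
`e_{(α_{i_1},1)}, …, e_{(α_{i_{ε-1}},1)}, e_{(α_{i_ε},0)}, …, e_{(α_{i_{s-1}},0)}`. -/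
def Rset (d : ℕ) (c : Fin (d + 1) → ℤ) (ε : ℕ) : Set (RA (d + 1)) :=
  ⋃ (s : ℕ) (α : Fin s → ↥(Avec d)) (_ : ∑ i, (α i : Fin (d + 1) → ℤ) = c)
    (g : Fin (s - 1) → Fin s) (_ : Function.Injective g),
    convexHull ℝ (Set.range fun j : Fin (s - 1) =>
      eVec (if (j : ℕ) < ε - 1 then app1 (α (g j)) else app0 (α (g j))))

/-- The realization `|F^l(Δ_b)| ⊆ ℝ^{A_{d+1}}`: the union over tuples
`(a_1, …, a_k)` of elements of `A_d` with `a_1 + ⋯ + a_k = b` and over indices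
`i_0, …, i_l ∈ {1, …, k}` of the convex hulls of `e_{(a_{i_0},0)}, …, e_{(a_{i_l},0)}`. -/
def Fset (d : ℕ) (b : Fin (d + 1) → ℤ) (l : ℕ) : Set (RA (d + 1)) :=
  ⋃ (k : ℕ) (a : Fin k → ↥(Avec d)) (_ : ∑ i, (a i : Fin (d + 1) → ℤ) = b)
    (idx : Fin (l + 1) → Fin k),
    convexHull ℝ (Set.range fun j => eVec (app0 (a (idx j))))

/-- The set `|S'_ε| ⊆ ℝ^{A_{d+1}}` associated to `S = ⟨a_1, …, a_k⟩`: the union over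
all `(χ_1, …, χ_k) ∈ {0,1}^k` with exactly `ε` entries equal to `1` of the convex hulls
`conv {e_{(a_1,χ_1)}, …, e_{(a_k,χ_k)}}`. -/
def Sprime {d k : ℕ} (a : Fin k → ↥(Avec d)) (ε : ℕ) : Set (RA (d + 1)) :=
  ⋃ (χ : Fin k → Bool) (_ : (Finset.univ.filter fun i => χ i = true).card = ε),
    convexHull ℝ (Set.range fun i => eVec (if χ i then app1 (a i) else app0 (a i)))

/-- The singular chain complex of a topological space with `ℂ` coefficients. -/
def singularChains : TopCat.{0} ⥤ ChainComplex (ModuleCat.{0} ℂ) ℕ :=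
  TopCat.toSSet ⋙ ((SimplicialObject.whiskering _ _).obj (ModuleCat.free ℂ)) ⋙
    AlgebraicTopology.alternatingFaceMapComplex (ModuleCat.{0} ℂ)

/-- Singular homology with `ℂ` coefficients, as a functor. -/
def SH (n : ℕ) : TopCat.{0} ⥤ ModuleCat.{0} ℂ :=
  singularChains ⋙ HomologicalComplex.homologyFunctor (ModuleCat.{0} ℂ) (ComplexShape.down ℕ) n

end

/-! A point in the interior of the triangle lies in a single simplex `conv {e_{u_0}, …, e_{u_k}}`
of `|Δ_{(b,ε)}|`, whose vertices therefore include `v`, `w` and `(a,1)`. Removing `(a,1)` leaves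
`k - 1` vertices summing to `(b - a, ε - 1)`, so exactly `ε - 1` of them end in `1`. Since
`ε ≤ ⌊k/2⌋ ≤ k - 3`, at least three end in `0`, and one of those, `u_q`, differs from `v` and `w`.
Listing the remaining `k - 2` vertices with the ones ending in `1` first presents their convex hull,
which contains the segment `[e_v, e_w]`, as one of the simplices making up `|R_{b-a,ε}|`. -/

section Enumeration

open Finset

theorem exists_equiv_fin_of_card_subtype {T : Type*} [Fintype T] (p : T → Prop)
    [DecidablePred p] {n m : ℕ} (hn : Fintype.card T = n) (hm : Fintype.card {t // p t} = m) :
    ∃ e : Fin n ≃ T, ∀ j, p (e j) ↔ (j : ℕ) < m := by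
  have hmn : m ≤ n := hm ▸ hn ▸ Fintype.card_subtype_le p
  obtain ⟨eP⟩ : Nonempty (Fin m ≃ {t // p t}) := ⟨(Fintype.equivFinOfCardEq hm).symm⟩
  obtain ⟨eN⟩ : Nonempty (Fin (n - m) ≃ {t // ¬ p t}) :=
    ⟨(Fintype.equivFinOfCardEq (by rw [Fintype.card_subtype_compl, hn, hm])).symm⟩
  refine ⟨(finCongr (by omega)).trans (finSumFinEquiv.symm.trans
    ((eP.sumCongr eN).trans (Equiv.sumCompl p))), fun j => ?_⟩
  obtain ⟨j, rfl⟩ := (finCongr (Nat.add_sub_cancel' hmn)).surjective j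
  refine Fin.addCases (fun i => ?_) (fun i => ?_) j
  · simpa using (eP i).2
  · simpa using (eN i).2

theorem exists_injective_fin_compl_singleton {ι : Type*} [Fintype ι] [DecidableEq ι]
    (p : ι → Prop) [DecidablePred p] {q : ι} (hq : ¬ p q) {n m : ℕ}
    (hn : Fintype.card ι = n + 1) (hm : Fintype.card {i // p i} = m) :
    ∃ g : Fin n → ι, Function.Injective g ∧ (∀ i ≠ q, i ∈ Set.range g) ∧
      ∀ j, p (g j) ↔ (j : ℕ) < m := by
  have hT : Fintype.card {i // i ≠ q} = n := by simp [Fintype.card_subtype_compl, hn]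
  have hTp : Fintype.card {t : {i // i ≠ q} // p t} = m := by
    rw [← hm]
    exact Fintype.card_congr (Equiv.subtypeSubtypeEquivSubtype fun hi hiq => hq (hiq ▸ hi))
  obtain ⟨e, he⟩ := exists_equiv_fin_of_card_subtype (fun t : {i // i ≠ q} => p t) hT hTp
  exact ⟨Subtype.val ∘ e, Subtype.val_injective.comp e.injective,
    fun i hi => ⟨e.symm ⟨i, hi⟩, by simp⟩, he⟩

theorem exists_not_ne_ne_of_card_filter_add_two_lt {ι : Type*} [Fintype ι] [DecidableEq ι]
    (p : ι → Prop) [DecidablePred p] (h : #{i | p i} + 2 < Fintype.card ι) (i₁ i₂ : ι) :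
    ∃ q, ¬ p q ∧ q ≠ i₁ ∧ q ≠ i₂ := by
  have hpos : 0 < #(({i | ¬ p i} : Finset ι) \ {i₁, i₂}) := by
    have := le_card_sdiff {i₁, i₂} ({i | ¬ p i} : Finset ι)
    have := card_le_two (a := i₁) (b := i₂)
    have := card_filter_add_card_filter_not (s := univ) fun i => p i
    rw [card_univ] at this
    omega
  obtain ⟨q, hq⟩ := card_pos.1 hpos
  simp only [mem_sdiff, mem_filter, mem_univ, true_and, mem_insert, mem_singleton, not_or] at hq
  exact ⟨q, hq.1, hq.2⟩

end Enumeration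

section Simplices

variable {d : ℕ}

lemma eVec_self (u : ↥(Avec d)) : eVec u u = 1 := if_pos rfl

lemma eVec_apply_nonneg (u x : ↥(Avec d)) : 0 ≤ eVec u x := by
  unfold eVec
  split_ifs <;> norm_num

lemma exists_mem_convexHull_triple_apply_pos (u₁ u₂ u₃ : ↥(Avec d)) :
    ∃ x ∈ convexHull ℝ {eVec u₁, eVec u₂, eVec u₃}, 0 < x u₁ ∧ 0 < x u₂ ∧ 0 < x u₃ := by
  set S : Set (RA d) := {eVec u₁, eVec u₂, eVec u₃}
  have hS : ∀ y ∈ S, y ∈ convexHull ℝ S := fun _ hy => subset_convexHull ℝ S hy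
  have hconv := convex_convexHull ℝ S
  refine ⟨(1 / 3 : ℝ) • eVec u₁ + (2 / 3 : ℝ) • ((1 / 2 : ℝ) • eVec u₂ + (1 / 2 : ℝ) • eVec u₃),
    hconv (hS _ (by simp [S])) (hconv (hS _ (by simp [S])) (hS _ (by simp [S]))
      (by norm_num) (by norm_num) (by norm_num)) (by norm_num) (by norm_num) (by norm_num), ?_⟩
  have h := eVec_apply_nonneg (d := d)
  simp only [Pi.add_apply, Pi.smul_apply, smul_eq_mul]
  refine ⟨?_, ?_, ?_⟩ <;> simp only [eVec_self] <;>
    linarith [h u₁ u₂, h u₁ u₃, h u₂ u₁, h u₂ u₃, h u₃ u₁, h u₃ u₂]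

lemma mem_range_of_apply_ne_zero {ι : Type*} {f : ι → ↥(Avec d)} {x : RA d}
    (hx : x ∈ convexHull ℝ (Set.range fun i => eVec (f i))) {u : ↥(Avec d)} (hu : x u ≠ 0) :
    u ∈ Set.range f := by
  by_contra hnot
  refine hu (convexHull_min ?_ (convex_hyperplane (LinearMap.proj (R := ℝ) u).isLinear 0) hx)
  rintro _ ⟨i, rfl⟩
  exact if_neg fun h => hnot ⟨i, h.symm⟩

lemma apply_last_eq_zero_or_one (u : ↥(Avec (d + 1))) :
    (u : Fin (d + 2) → ℤ) (Fin.last (d + 1)) = 0 ∨ (u : Fin (d + 2) → ℤ) (Fin.last (d + 1)) = 1 :=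
  u.2.2 _ (by simp [Fin.ext_iff])

def dropLast (u : ↥(Avec (d + 1))) : ↥(Avec d) :=
  ⟨Fin.init (u : Fin (d + 2) → ℤ), u.2.1,
    fun i hi => u.2.2 i.castSucc (Fin.castSucc_ne_zero_iff.mpr hi)⟩

lemma ite_app1_app0_dropLast (u : ↥(Avec (d + 1))) :
    (if (u : Fin (d + 2) → ℤ) (Fin.last (d + 1)) = 1 then app1 (dropLast u)
      else app0 (dropLast u)) = u := by
  apply Subtype.ext
  split_ifs with h
  · show Fin.snoc (Fin.init (u : Fin (d + 2) → ℤ)) 1 = u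
    rw [← h]
    exact Fin.snoc_init_self (u : Fin (d + 2) → ℤ)
  · show Fin.snoc (Fin.init (u : Fin (d + 2) → ℤ)) 0 = u
    rw [← (apply_last_eq_zero_or_one u).resolve_right h]
    exact Fin.snoc_init_self (u : Fin (d + 2) → ℤ)

lemma sum_mem_NA {n : ℕ} (f : Fin n → ↥(Avec d)) : ∑ i, (f i : Fin (d + 1) → ℤ) ∈ NA d :=
  AddSubmonoid.sum_mem _ fun i _ => AddSubmonoid.subset_closure (f i).2

lemma sum_apply_zero {n : ℕ} (f : Fin n → ↥(Avec d)) :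
    (∑ i, (f i : Fin (d + 1) → ℤ)) 0 = n := by
  simp [Finset.sum_apply, (f _).2.1]

open Finset in
lemma sum_apply_last {n : ℕ} (f : Fin n → ↥(Avec (d + 1))) :
    (∑ i, (f i : Fin (d + 2) → ℤ)) (Fin.last (d + 1))
      = #{i | (f i : Fin (d + 2) → ℤ) (Fin.last (d + 1)) = 1} := by
  rw [Finset.sum_apply, Finset.natCast_card_filter]
  refine Finset.sum_congr rfl fun i _ => ?_
  rcases apply_last_eq_zero_or_one (f i) with h | h <;> simp [h]

variable {s : ℕ} {b : Fin (d + 1) → ℤ} {ε : ℕ} {f : Fin (s + 1) → ↥(Avec (d + 1))}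
  {a : ↥(Avec d)} {i₀ : Fin (s + 1)}

lemma sum_dropLast_succAbove (hf : ∑ i, (f i : Fin (d + 2) → ℤ) = Fin.snoc b (ε : ℤ))
    (hi₀ : f i₀ = app1 a) :
    ∑ j, (dropLast (f (i₀.succAbove j)) : Fin (d + 1) → ℤ) = b - a := by
  funext m
  have h := congrFun hf m.castSucc
  simp only [Finset.sum_apply, Fin.sum_univ_succAbove _ i₀, hi₀, Fin.snoc_castSucc] at h
  simp only [Finset.sum_apply, Pi.sub_apply, ← h]
  simp [app1, dropLast, Fin.init]

open Finset in
lemma card_last_eq_one_succAbove (hf : ∑ i, (f i : Fin (d + 2) → ℤ) = Fin.snoc b (ε : ℤ))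
    (hi₀ : f i₀ = app1 a) :
    #{j | (f (i₀.succAbove j) : Fin (d + 2) → ℤ) (Fin.last (d + 1)) = 1} + 1 = ε := by
  have h := congrFun hf (Fin.last (d + 1))
  rw [Finset.sum_apply, Fin.sum_univ_succAbove _ i₀, ← Finset.sum_apply,
    sum_apply_last (fun j => f (i₀.succAbove j)), Fin.snoc_last, hi₀] at h
  simp only [app1, Fin.snoc_last] at h
  omega

lemma convexHull_facet_subset_Rset (hf : ∑ i, (f i : Fin (d + 2) → ℤ) = Fin.snoc b (ε : ℤ))
    (hi₀ : f i₀ = app1 a) {q : Fin s}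
    (hq : (f (i₀.succAbove q) : Fin (d + 2) → ℤ) (Fin.last (d + 1)) = 0) :
    convexHull ℝ ((fun j => eVec (f (i₀.succAbove j))) '' {q}ᶜ) ⊆ Rset d (b - a) ε := by
  obtain ⟨g, hg, hrange, hbit⟩ := exists_injective_fin_compl_singleton
    (fun j => (f (i₀.succAbove j) : Fin (d + 2) → ℤ) (Fin.last (d + 1)) = 1)
    (q := q) (by simp [hq]) (n := s - 1) (m := ε - 1)
    (by rw [Fintype.card_fin]; have := q.pos; omega)
    (by rw [Fintype.card_subtype]; have := card_last_eq_one_succAbove hf hi₀; omega)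
  intro x hx
  simp only [Rset, Set.mem_iUnion]
  refine ⟨s, _, sum_dropLast_succAbove hf hi₀, g, hg, convexHull_mono ?_ hx⟩
  rintro _ ⟨j, hj, rfl⟩
  obtain ⟨t, rfl⟩ := hrange j hj
  refine ⟨t, ?_⟩
  dsimp only
  rw [← if_congr (hbit t) rfl rfl, ite_app1_app0_dropLast]

end Simplices

theorem edge_link_in_Rset_general (d : ℕ) (b : Fin (d + 1) → ℤ)
    (k : ℕ) (hk : b 0 = (k : ℤ)) (hk5 : 5 ≤ k) (ε : ℕ) (hε2 : ε ≤ k / 2)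
    (a : ↥(Avec d)) (v w : ↥(Avec (d + 1))) (hv : v ≠ app1 a) (hw : w ≠ app1 a)
    (htri : convexHull ℝ {eVec v, eVec w, eVec (app1 a)} ⊆
      Delta (d + 1) (Fin.snoc b (ε : ℤ))) :
    (b - ↑a) ∈ NA d ∧ segment ℝ (eVec v) (eVec w) ⊆ Rset d (b - ↑a) ε := by
  obtain ⟨x, hx, hxv, hxw, hxa⟩ := exists_mem_convexHull_triple_apply_pos v w (app1 a)
  obtain ⟨n, f, hf, hxf⟩ : ∃ n, ∃ f : Fin n → ↥(Avec (d + 1)),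
      ∑ i, (f i : Fin (d + 2) → ℤ) = Fin.snoc b (ε : ℤ) ∧
        x ∈ convexHull ℝ (Set.range fun i => eVec (f i)) := by
    simpa [Delta] using htri hx
  obtain ⟨i₁, rfl⟩ := mem_range_of_apply_ne_zero hxf hxv.ne'
  obtain ⟨i₂, rfl⟩ := mem_range_of_apply_ne_zero hxf hxw.ne'
  obtain ⟨i₀, hi₀⟩ := mem_range_of_apply_ne_zero hxf hxa.ne'
  have hn : n = k := by
    have := sum_apply_zero f
    rw [hf] at this
    exact_mod_cast this.symm.trans hk
  obtain ⟨s, rfl⟩ : ∃ s, n = s + 1 := ⟨k - 1, by omega⟩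
  refine ⟨sum_dropLast_succAbove hf hi₀ ▸ sum_mem_NA _, ?_⟩
  obtain ⟨p₁, rfl⟩ := Fin.exists_succAbove_eq (x := i₁) (y := i₀) (by rintro rfl; exact hv hi₀)
  obtain ⟨p₂, rfl⟩ := Fin.exists_succAbove_eq (x := i₂) (y := i₀) (by rintro rfl; exact hw hi₀)
  obtain ⟨q, hq, hq₁, hq₂⟩ := exists_not_ne_ne_of_card_filter_add_two_lt
    (fun j => (f (i₀.succAbove j) : Fin (d + 2) → ℤ) (Fin.last (d + 1)) = 1)
    (by have := card_last_eq_one_succAbove hf hi₀; rw [Fintype.card_fin]; omega) p₁ p₂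
  refine (segment_subset_convexHull ?_ ?_).trans
    (convexHull_facet_subset_Rset hf hi₀ ((apply_last_eq_zero_or_one _).resolve_right hq))
  exacts [⟨p₁, hq₁.symm, rfl⟩, ⟨p₂, hq₂.symm, rfl⟩]

/-- Edge-link claim from the proof of the `2`-cycle lemma: if `deg b = k ≥ 5`,
`1 ≤ ε ≤ ⌊k/2⌋`, `v, w ∈ A_{d+1}` are both different from `(a,1)`, and
`conv {e_v, e_w, e_{(a,1)}} ⊆ |Δ_{(b,ε)}|`, then `b - a ∈ ℕA_d` and the segment
`conv {e_v, e_w}` is contained in `|R_{b-a,ε}|`. -/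
theorem edge_link_in_Rset (d : ℕ) (hd : 1 ≤ d) (b : Fin (d + 1) → ℤ) (hb : b ∈ NA d)
    (k : ℕ) (hk : b 0 = (k : ℤ)) (hk5 : 5 ≤ k) (ε : ℕ) (hε1 : 1 ≤ ε) (hε2 : ε ≤ k / 2)
    (a : ↥(Avec d)) (v w : ↥(Avec (d + 1))) (hv : v ≠ app1 a) (hw : w ≠ app1 a)
    (htri : convexHull ℝ {eVec v, eVec w, eVec (app1 a)} ⊆
      Delta (d + 1) (Fin.snoc b (ε : ℤ))) :
    (b - ↑a) ∈ NA d ∧ segment ℝ (eVec v) (eVec w) ⊆ Rset d (b - ↑a) ε :=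
  edge_link_in_Rset_general d b k hk hk5 ε hε2 a v w hv hw htri
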